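/- Let V(x,y) be the kernel on T = {0}∪{1/n : n ≥ 2} defined by V(0,0)=1, V(1/i,0)=f_i, V(0,1/j)=g_j, V(1/i,1/j)=δ_{ij}λ_j + f_i g_j, where 0<f_j,g_j<1, λ_j>0, and both Σ_{j≥2}(1−f_j)/λ_j < 1 and Σ_{j≥2}(1−g_j)/λ_j < 1. Define h(0) = 1 − Σ_{j≥2} f_j(1−g_j)/λ_j and h(1/k) = (1−g_k)/λ_k for k ≥ 2. Then h(x) > 0 for all x ∈ T, 1 < Σ_{x∈T} h(x) < 2, and Σ_{x∈T} h(x) V(x,y) = 1 for every y ∈ T. -/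

import Mathlib

/-- The kernel `V` on `T = {0} ∪ {1/n : n ≥ 2}`, modelled on `Option ℕ` where
`none` is the state `0` and `some j` is `1/(j+2)`: `V(0,0)=1`, `V(1/i,0)=f_i`,
`V(0,1/j)=g_j`, `V(1/i,1/j)= δ_{ij} λ_j + f_i g_j`. Here `f j, g j, lam j`
stand for `f_{j+2}, g_{j+2}, λ_{j+2}`. -/
noncomputable def kernelV (f g lam : ℕ → ℝ) : Option ℕ → Option ℕ → ℝ
  | none, none => 1
  | some i, none => f i
  | none, some j => g j
  | some i, some j => (if i = j then lam j else 0) + f i * g j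

/-- Lemma 7.4: the vector `1` is a left-potential for `V`: the function `h` with
`h(0) = 1 − Σ f_j(1−g_j)/λ_j`, `h(1/k) = (1−g_k)/λ_k` is positive, its total
mass lies strictly between 1 and 2, and `Σ_x h(x) V(x,y) = 1` for all `y`. -/
theorem kernelV_left_potential (f g lam : ℕ → ℝ)
    (hf : ∀ j, 0 < f j ∧ f j < 1) (hg : ∀ j, 0 < g j ∧ g j < 1)
    (hlam : ∀ j, 0 < lam j)
    (hfsum : Summable fun j : ℕ => (1 - f j) / lam j)
    (hflt : (∑' j : ℕ, (1 - f j) / lam j) < 1)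
    (hgsum : Summable fun j : ℕ => (1 - g j) / lam j)
    (hglt : (∑' j : ℕ, (1 - g j) / lam j) < 1)
    (h : Option ℕ → ℝ)
    (hh0 : h none = 1 - ∑' j : ℕ, f j * (1 - g j) / lam j)
    (hhk : ∀ k, h (some k) = (1 - g k) / lam k) :
    (∀ x : Option ℕ, 0 < h x) ∧
    (1 < h none + ∑' k : ℕ, h (some k)) ∧
    (h none + ∑' k : ℕ, h (some k)) < 2 ∧
    ∀ y : Option ℕ,
      h none * kernelV f g lam none y
        + (∑' j : ℕ, h (some j) * kernelV f g lam (some j) y) = 1 := by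
  have hApos : ∀ j, 0 < (1 - g j) / lam j := fun j =>
    div_pos (by linarith [(hg j).2]) (hlam j)
  have hBA : ∀ j : ℕ, f j * (1 - g j) / lam j = f j * ((1 - g j) / lam j) :=
    fun j => mul_div_assoc _ _ _
  have hBpos : ∀ j : ℕ, 0 < f j * (1 - g j) / lam j := fun j => by
    rw [hBA]; exact mul_pos (hf j).1 (hApos j)
  have hBleA : ∀ j : ℕ, f j * (1 - g j) / lam j ≤ (1 - g j) / lam j := fun j => by
    rw [hBA]; exact mul_le_of_le_one_left (hApos j).le (hf j).2.le
  have hBsum : Summable (fun j : ℕ => f j * (1 - g j) / lam j) :=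
    Summable.of_nonneg_of_le (fun j => (hBpos j).le) hBleA hgsum
  have hBltA : ∀ j : ℕ, f j * (1 - g j) / lam j < (1 - g j) / lam j := fun j => by
    rw [hBA]; exact mul_lt_of_lt_one_left (hApos j) (hf j).2
  have htBlt : (∑' j : ℕ, f j * (1 - g j) / lam j) < ∑' j : ℕ, (1 - g j) / lam j :=
    Summable.tsum_lt_tsum hBleA (hBltA 0) hBsum hgsum
  have htBlt1 : (∑' j : ℕ, f j * (1 - g j) / lam j) < 1 := htBlt.trans hglt
  have hDsub : ∀ j : ℕ, (1 - g j) / lam j - f j * (1 - g j) / lam j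
      = (1 - f j) / lam j * (1 - g j) := fun j => by
    field_simp
  have hDle : ∀ j : ℕ, (1 - g j) / lam j - f j * (1 - g j) / lam j ≤ (1 - f j) / lam j :=
    fun j => by
      rw [hDsub j]
      exact mul_le_of_le_one_right
        (div_nonneg (by linarith [(hf j).2]) (hlam j).le) (by linarith [(hg j).1])
  have htsub : (∑' j : ℕ, ((1 - g j) / lam j - f j * (1 - g j) / lam j))
      = (∑' j : ℕ, (1 - g j) / lam j) - ∑' j : ℕ, f j * (1 - g j) / lam j :=
    Summable.tsum_sub hgsum hBsum
  have hDsum : Summable (fun j : ℕ => (1 - g j) / lam j - f j * (1 - g j) / lam j) :=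
    hgsum.sub hBsum
  have htDle : (∑' j : ℕ, ((1 - g j) / lam j - f j * (1 - g j) / lam j))
      ≤ ∑' j : ℕ, (1 - f j) / lam j := Summable.tsum_le_tsum hDle hDsum hfsum
  have hmass : (∑' k : ℕ, h (some k)) = ∑' j : ℕ, (1 - g j) / lam j :=
    tsum_congr fun k => hhk k
  refine ⟨?_, ?_, ?_, ?_⟩
  · rintro (_ | k)
    · rw [hh0]; linarith
    · rw [hhk]; exact hApos k
  · rw [hh0, hmass]; linarith
  · rw [hh0, hmass]
    rw [htsub] at htDle
    linarith [htDle.trans_lt hflt]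
  · rintro (_ | k)
    · have he : (∑' j : ℕ, h (some j) * kernelV f g lam (some j) none)
          = ∑' j : ℕ, f j * (1 - g j) / lam j := by
        refine tsum_congr fun j => ?_
        rw [hhk]; show (1 - g j) / lam j * f j = _; rw [hBA]; ring
      rw [he, hh0]
      show (1 - _) * 1 + _ = 1
      ring
    · have he : ∀ j : ℕ, h (some j) * kernelV f g lam (some j) (some k)
          = (if j = k then (1 - g k) / lam k * lam k else 0)
            + (f j * (1 - g j) / lam j) * g k := by
        intro j
        rw [hhk]
        show (1 - g j) / lam j * ((if j = k then lam k else 0) + f j * g k) = _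
        rw [hBA]
        split_ifs with hjk
        · subst hjk; ring
        · ring
      rw [tsum_congr he,
        Summable.tsum_add ((hasSum_ite_eq k ((1 - g k) / lam k * lam k)).summable)
          (hBsum.mul_right (g k)),
        (tsum_ite_eq k (fun _ => (1 - g k) / lam k * lam k) :
          (∑' b : ℕ, if b = k then (1 - g k) / lam k * lam k else 0) = (1 - g k) / lam k * lam k),
        tsum_mul_right, hh0]
      have hlk : (1 - g k) / lam k * lam k = 1 - g k :=
        div_mul_cancel₀ _ (hlam k).ne'
      show (1 - _) * g k + _ = 1
      rw [hlk]
      ring
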